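/- arXiv:1806.10431 — 2 statements merged into one kernel-verified Lean document; each statement's English description precedes it below -/
import Mathlib

section
/- A polyhedron (finite intersection of closed half-spaces) in a finite-dimensional real vector space contains a vertex (an extreme point) if and only if it does not contain a line. -/
/-!
If a polyhedron `P = {x | ∀ i, b i ≤ φ i x}` contains a line with direction `v`, then every `φ i`
vanishes on `v`, so every point `x` of `P` is the midpoint of `x - v` and `x + v` in `P`.

Conversely, call the *active kernel* at `x ∈ P` the intersection of the kernels of the
constraints that are tight at `x`. A point with trivial active kernel is extreme. If the active
kernel at `x` contains `w ≠ 0`, the line `x + ℝ w` leaves `P`, so some constraint decreases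
along `w` or `-w`; moving from `x` in that direction until the first constraint becomes tight
keeps the old tight constraints and adds one not vanishing on `w`, so the active kernel strictly
shrinks. A point of `P` with minimal active kernel is therefore a vertex.
-/

open Set

variable {𝕜 E ι : Type*} [Field 𝕜] [AddCommGroup E] [Module 𝕜 E]
  {φ : ι → Module.Dual 𝕜 E} {b : ι → 𝕜} {x : E}

def activeKernel (φ : ι → Module.Dual 𝕜 E) (b : ι → 𝕜) (x : E) : Submodule 𝕜 E :=
  ⨅ (i) (_ : φ i x = b i), LinearMap.ker (φ i)

lemma mem_activeKernel {v : E} :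
    v ∈ activeKernel φ b x ↔ ∀ i, φ i x = b i → φ i v = 0 := by
  simp [activeKernel]

lemma activeKernel_anti {y : E} (h : ∀ i, φ i x = b i → φ i y = b i) :
    activeKernel φ b y ≤ activeKernel φ b x :=
  fun _ hv ↦ mem_activeKernel.2 fun i hi ↦ mem_activeKernel.1 hv i (h i hi)

variable [LinearOrder 𝕜]

def polyhedron (φ : ι → Module.Dual 𝕜 E) (b : ι → 𝕜) : Set E :=
  {x | ∀ i, b i ≤ φ i x}

lemma add_smul_mem_polyhedron {v : E} (hx : x ∈ polyhedron φ b) (hv : ∀ i, φ i v = 0) (t : 𝕜) :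
    x + t • v ∈ polyhedron φ b := fun i ↦ by
  simpa [hv i] using hx i

variable [IsStrictOrderedRing 𝕜]

lemma apply_eq_zero_of_range_subset_polyhedron {p v : E}
    (h : range (fun t : 𝕜 ↦ p + t • v) ⊆ polyhedron φ b) (i : ι) : φ i v = 0 := by
  by_contra hv
  have := h (mem_range_self ((b i - φ i p - 1) / φ i v)) i
  simp only [map_add, map_smul, smul_eq_mul, div_mul_cancel₀ _ hv] at this
  linarith

lemma notMem_extremePoints_polyhedron {v : E} (hv0 : v ≠ 0) (hv : ∀ i, φ i v = 0) (x : E) :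
    x ∉ extremePoints 𝕜 (polyhedron φ b) := by
  intro hx
  have hseg : x ∈ openSegment 𝕜 (x + (-1 : 𝕜) • v) (x + (1 : 𝕜) • v) :=
    ⟨1 / 2, 1 / 2, by norm_num, by norm_num, by norm_num, by module⟩
  have := (mem_extremePoints.1 hx).2 _ (add_smul_mem_polyhedron hx.1 hv _)
    _ (add_smul_mem_polyhedron hx.1 hv _) hseg
  exact hv0 (by simpa using this.2)

theorem extremePoints_polyhedron_eq_empty_of_range_subset {p v : E} (hv0 : v ≠ 0)
    (h : range (fun t : 𝕜 ↦ p + t • v) ⊆ polyhedron φ b) :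
    extremePoints 𝕜 (polyhedron φ b) = ∅ :=
  eq_empty_of_forall_notMem <|
    notMem_extremePoints_polyhedron hv0 (apply_eq_zero_of_range_subset_polyhedron h)

lemma apply_eq_of_mem_openSegment {f : Module.Dual 𝕜 E} {c : 𝕜} {y z : E}
    (hy : c ≤ f y) (hz : c ≤ f z) (hx : x ∈ openSegment 𝕜 y z) (hfx : f x = c) :
    f y = c ∧ f z = c := by
  obtain ⟨s, t, hs, ht, hst, rfl⟩ := hx
  simp only [map_add, map_smul, smul_eq_mul] at hfx
  have hsum : s * (f y - c) + t * (f z - c) = 0 := by linear_combination hfx - c * hst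
  constructor <;>
    nlinarith [mul_nonneg hs.le (sub_nonneg.2 hy), mul_nonneg ht.le (sub_nonneg.2 hz)]

lemma mem_extremePoints_polyhedron_of_activeKernel_eq_bot (hx : x ∈ polyhedron φ b)
    (h : activeKernel φ b x = ⊥) : x ∈ extremePoints 𝕜 (polyhedron φ b) := by
  refine mem_extremePoints.2 ⟨hx, fun y hy z hz hseg ↦ ?_⟩
  have hactive i (hi : φ i x = b i) : φ i y = b i ∧ φ i z = b i :=
    apply_eq_of_mem_openSegment (hy i) (hz i) hseg hi
  have hsub {w : E} (hw : ∀ i, φ i x = b i → φ i w = b i) : w = x := by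
    rw [← sub_eq_zero, ← Submodule.mem_bot 𝕜, ← h, mem_activeKernel]
    intro i hi
    rw [map_sub, hw i hi, hi, sub_self]
  exact ⟨hsub fun i hi ↦ (hactive i hi).1, hsub fun i hi ↦ (hactive i hi).2⟩

lemma exists_add_smul_mem_polyhedron_apply_eq [Finite ι] {w : E} {j : ι}
    (hx : x ∈ polyhedron φ b) (hj : φ j w < 0) :
    ∃ t : 𝕜, x + t • w ∈ polyhedron φ b ∧ ∃ k, φ k w ≠ 0 ∧ φ k (x + t • w) = b k := by
  obtain ⟨k, hk, hmin⟩ := exists_min_image {k | φ k w < 0}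
    (fun k ↦ (b k - φ k x) / φ k w) (toFinite _) ⟨j, hj⟩
  set t := (b k - φ k x) / φ k w
  have ht : 0 ≤ t := div_nonneg_of_nonpos (by linarith [hx k]) hk.le
  refine ⟨t, fun i ↦ ?_, k, hk.ne, ?_⟩
  · simp only [map_add, map_smul, smul_eq_mul]
    rcases lt_or_ge (φ i w) 0 with hi | hi
    · have := hmin i hi
      rw [le_div_iff_of_neg hi] at this
      linarith
    · nlinarith [hx i]
  · simp only [t, map_add, map_smul, smul_eq_mul, div_mul_cancel₀ _ hk.ne]
    ring

lemma exists_activeKernel_lt [Finite ι]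
    (hnl : ¬ ∃ p v : E, v ≠ 0 ∧ range (fun t : 𝕜 ↦ p + t • v) ⊆ polyhedron φ b)
    (hx : x ∈ polyhedron φ b) (hK : activeKernel φ b x ≠ ⊥) :
    ∃ y ∈ polyhedron φ b, activeKernel φ b y < activeKernel φ b x := by
  obtain ⟨v, hvK, hv0⟩ := Submodule.exists_mem_ne_zero_of_ne_bot hK
  obtain ⟨j, hj⟩ : ∃ j, φ j v ≠ 0 := by
    by_contra! hv
    exact hnl ⟨x, v, hv0, range_subset_iff.2 (add_smul_mem_polyhedron hx hv)⟩
  obtain ⟨w, hwK, hwj⟩ : ∃ w ∈ activeKernel φ b x, φ j w < 0 := by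
    rcases hj.lt_or_gt with hneg | hpos
    · exact ⟨v, hvK, hneg⟩
    · exact ⟨-v, neg_mem hvK, by simpa using hpos⟩
  obtain ⟨t, hy, k, hkw, hky⟩ := exists_add_smul_mem_polyhedron_apply_eq hx hwj
  have hkeep i (hi : φ i x = b i) : φ i (x + t • w) = b i := by
    simp [mem_activeKernel.1 hwK i hi, hi]
  refine ⟨x + t • w, hy, lt_of_le_of_ne (activeKernel_anti hkeep) fun heq ↦ hkw ?_⟩
  exact mem_activeKernel.1 (heq ▸ hwK) k hky

theorem extremePoints_polyhedron_nonempty [Finite ι] [FiniteDimensional 𝕜 E]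
    (hne : (polyhedron φ b).Nonempty)
    (hnl : ¬ ∃ p v : E, v ≠ 0 ∧ range (fun t : 𝕜 ↦ p + t • v) ⊆ polyhedron φ b) :
    (extremePoints 𝕜 (polyhedron φ b)).Nonempty := by
  obtain ⟨_, ⟨x, hx, rfl⟩, hmin⟩ :=
    wellFounded_lt.has_min (activeKernel φ b '' polyhedron φ b) (hne.image _)
  refine ⟨x, mem_extremePoints_polyhedron_of_activeKernel_eq_bot hx ?_⟩
  by_contra hK
  obtain ⟨y, hy, hlt⟩ := exists_activeKernel_lt hnl hx hK
  exact hmin _ (mem_image_of_mem _ hy) hlt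

theorem extremePoints_polyhedron_nonempty_iff [Finite ι] [FiniteDimensional 𝕜 E]
    (hne : (polyhedron φ b).Nonempty) :
    (extremePoints 𝕜 (polyhedron φ b)).Nonempty ↔
      ¬ ∃ p v : E, v ≠ 0 ∧ range (fun t : 𝕜 ↦ p + t • v) ⊆ polyhedron φ b := by
  refine ⟨?_, extremePoints_polyhedron_nonempty hne⟩
  rintro hext ⟨p, v, hv0, h⟩
  simp [extremePoints_polyhedron_eq_empty_of_range_subset hv0 h] at hext

/-- A nonempty polyhedron (finite intersection of closed half-spaces)
in (ℝⁿ)* contains a vertex (an extreme point) if and only if it does not contain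
a line {p + t•v : t ∈ ℝ}, v ≠ 0. -/
theorem polyhedron_has_vertex_iff_no_line
    (n d : ℕ) (X : Fin d → (Fin n → ℝ)) (lam : Fin d → ℝ)
    (Δ : Set (Fin n → ℝ))
    (hΔ : Δ = ⋂ j : Fin d, {μ : Fin n → ℝ | lam j ≤ ∑ i, μ i * X j i})
    (hne : Δ.Nonempty) :
    (∃ v, v ∈ Set.extremePoints ℝ Δ) ↔
      ¬ ∃ (p v : Fin n → ℝ), v ≠ 0 ∧ Set.range (fun t : ℝ => p + t • v) ⊆ Δ := by
  have hpoly : Δ = polyhedron (fun j ↦ (dotProductBilin ℝ ℝ).flip (X j)) lam := by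
    ext μ
    simp [hΔ, polyhedron, dotProduct]
  subst hpoly
  exact extremePoints_polyhedron_nonempty_iff hne
end

section
/- A pointed polyhedron (a polyhedron that does not contain a line) is compact if and only if it does not contain a ray. -/
/-- A pointed polyhedron (a polyhedron containing no line) is compact
if and only if it does not contain a ray {p + t•v : t ≥ 0}, v ≠ 0. -/
theorem pointed_polyhedron_compact_iff_no_ray
    (n d : ℕ) (X : Fin d → (Fin n → ℝ)) (lam : Fin d → ℝ)
    (Δ : Set (Fin n → ℝ))
    (hΔ : Δ = ⋂ j : Fin d, {μ : Fin n → ℝ | lam j ≤ ∑ i, μ i * X j i})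
    (hpointed : ¬ ∃ (p v : Fin n → ℝ), v ≠ 0 ∧
      Set.range (fun t : ℝ => p + t • v) ⊆ Δ) :
    IsCompact Δ ↔
      ¬ ∃ (p v : Fin n → ℝ), v ≠ 0 ∧
        {x | ∃ t : ℝ, 0 ≤ t ∧ x = p + t • v} ⊆ Δ := by
  set g : Fin d → (Fin n → ℝ) → ℝ := fun j μ => ∑ i, μ i * X j i with hg
  have hgc : ∀ j, Continuous (g j) := fun j =>
    continuous_finset_sum _ fun i _ => (continuous_apply i).mul continuous_const
  have hg_smul : ∀ j (t : ℝ) μ, g j (t • μ) = t * g j μ := by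
    intro j t μ
    simp [hg, Finset.mul_sum, mul_assoc]
  have hg_add : ∀ j μ ν, g j (μ + ν) = g j μ + g j ν := by
    intro j μ ν
    simp [hg, add_mul, Finset.sum_add_distrib]
  have hmem : ∀ x, x ∈ Δ ↔ ∀ j, lam j ≤ g j x := by
    intro x; rw [hΔ]; simp [Set.mem_iInter, hg]
  have hclosed : IsClosed Δ := by
    rw [hΔ]
    exact isClosed_iInter fun j => isClosed_le continuous_const (hgc j)
  constructor
  · -- compact ⇒ no ray
    intro hcpt
    rintro ⟨p, v, hv, hray⟩
    obtain ⟨C, hC⟩ := hcpt.isBounded.exists_norm_le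
    have hvn : 0 < ‖v‖ := norm_pos_iff.mpr hv
    have hpΔ : p ∈ Δ := hray ⟨0, le_refl 0, by simp⟩
    have hCp : ‖p‖ ≤ C := hC p hpΔ
    set t : ℝ := (C + ‖p‖ + 1) / ‖v‖ with ht
    have ht0 : 0 ≤ t := by
      apply div_nonneg _ hvn.le
      nlinarith [norm_nonneg p]
    have hxΔ : p + t • v ∈ Δ := hray ⟨t, ht0, rfl⟩
    have h1 : t * ‖v‖ ≤ ‖p + t • v‖ + ‖p‖ := by
      calc t * ‖v‖ = ‖t • v‖ := by rw [norm_smul, Real.norm_eq_abs, abs_of_nonneg ht0]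
        _ = ‖(p + t • v) - p‖ := by congr 1; abel
        _ ≤ ‖p + t • v‖ + ‖p‖ := norm_sub_le _ _
    have h2 : t * ‖v‖ = C + ‖p‖ + 1 := div_mul_cancel₀ _ hvn.ne'
    have := hC _ hxΔ
    linarith
  · -- no ray ⇒ compact
    intro hnoray
    rw [Metric.isCompact_iff_isClosed_bounded]
    refine ⟨hclosed, ?_⟩
    by_contra hub
    rw [isBounded_iff_forall_norm_le] at hub
    push_neg at hub
    choose x hxΔ hxn using fun k : ℕ => hub k
    have hxpos : ∀ k : ℕ, (0 : ℝ) < ‖x k‖ := fun k =>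
      lt_of_le_of_lt (Nat.cast_nonneg k) (hxn k)
    set u : ℕ → (Fin n → ℝ) := fun k => ‖x k‖⁻¹ • x k with hu
    have husph : ∀ k, u k ∈ Metric.sphere (0 : Fin n → ℝ) 1 := by
      intro k
      simp only [Metric.mem_sphere, dist_zero_right, hu, norm_smul, Real.norm_eq_abs,
        abs_of_nonneg (inv_nonneg.mpr (norm_nonneg _))]
      exact inv_mul_cancel₀ (hxpos k).ne'
    obtain ⟨v, hvsph, φ, hφ, hvt⟩ :=
      (isCompact_sphere (0 : Fin n → ℝ) 1).tendsto_subseq husph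
    have hv : v ≠ 0 := by
      intro h
      rw [Metric.mem_sphere, h, dist_self] at hvsph
      norm_num at hvsph
    -- ‖x (φ k)‖ → ∞
    have hnt : Filter.Tendsto (fun k => ‖x (φ k)‖) Filter.atTop Filter.atTop := by
      apply Filter.tendsto_atTop_mono (fun k => (hxn (φ k)).le)
      exact Filter.tendsto_atTop_mono (fun k => Nat.cast_le.mpr (hφ.id_le k))
        tendsto_natCast_atTop_atTop
    have hvrec : ∀ j, 0 ≤ g j v := by
      intro j
      have hlim1 : Filter.Tendsto (fun k => ‖x (φ k)‖⁻¹ * lam j) Filter.atTop (nhds 0) := by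
        have := hnt.inv_tendsto_atTop.mul_const (lam j)
        simpa using this
      have hlim2 : Filter.Tendsto (fun k => g j (u (φ k))) Filter.atTop (nhds (g j v)) :=
        ((hgc j).tendsto v).comp hvt
      refine le_of_tendsto_of_tendsto' hlim1 hlim2 fun k => ?_
      rw [hu, hg_smul]
      exact mul_le_mul_of_nonneg_left ((hmem _).mp (hxΔ (φ k)) j)
        (inv_nonneg.mpr (norm_nonneg _))
    refine hnoray ⟨x 0, v, hv, ?_⟩
    rintro y ⟨t, ht0, rfl⟩
    rw [hmem]
    intro j
    rw [hg_add, hg_smul]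
    have h1 : lam j ≤ g j (x 0) := (hmem _).mp (hxΔ 0) j
    nlinarith [hvrec j]
end
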